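/- arXiv:0810.0239 — 2 statements merged into one kernel-verified Lean document; each statement's English description precedes it below -/
import Mathlib

section
/- The matrix R_0 is invertible and α_0 = -D_1 R_0^{-1}; moreover, for every 0 < n < Λ, the matrix α_{n-1} U + R_n is invertible and α_n = -D_{n+1} (α_{n-1} U + R_n)^{-1}. Consequently, any sequence of row vectors (π_n)_{0 ≤ n ≤ Λ} satisfying π_n = π_{n+1} α_n for all 0 ≤ n < Λ satisfies 0 = π_0 R_0 + π_1 D_1 and 0 = π_{n-1} U + π_n R_n + π_{n+1} D_{n+1} for all 0 < n < Λ. -/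
open Matrix

noncomputable section

/-- The matrix `U` encoding protein production (only when the promoter is on). -/
def Umat (μ : ℝ) : Matrix (Fin 2) (Fin 2) ℝ := !![0, 0; 0, μ]

/-- The matrix `D_n = ν(n)·I` encoding degradation. -/
def Dmat (ν : ℕ → ℝ) (n : ℕ) : Matrix (Fin 2) (Fin 2) ℝ := !![ν n, 0; 0, ν n]

/-- The matrix `R_n` (with its boundary version at `n = 0`); for `1 ≤ n ≤ Λ - 1`
this is the interior matrix. -/
def Rmat (μ : ℝ) (ν g κ : ℕ → ℝ) (n : ℕ) : Matrix (Fin 2) (Fin 2) ℝ :=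
  if n = 0 then !![-(g 0), g 0; κ 0, -(κ 0 + μ)]
  else !![-(g n + ν n), g n; κ n, -(κ n + ν n + μ)]

/-- The transfer matrix `α_n`. -/
def alphaMat (μ : ℝ) (ν g κ : ℕ → ℝ) (n : ℕ) : Matrix (Fin 2) (Fin 2) ℝ :=
  if n = 0 then
    (ν 1 / μ) • !![(κ 0 + μ) / g 0, 1; κ 0 / g 0, 1]
  else
    (ν (n + 1) / μ) • !![(κ n + μ) / (g n + ν n), 1; κ n / (g n + ν n), 1]

private lemma aux_inv_eq (M A D : Matrix (Fin 2) (Fin 2) ℝ) (h : IsUnit M)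
    (hAM : A * M = -D) : A = -(D * M⁻¹) := by
  have hd : IsUnit M.det := (Matrix.isUnit_iff_isUnit_det M).mp h
  calc A = A * (M * M⁻¹) := by rw [Matrix.mul_nonsing_inv M hd, Matrix.mul_one]
    _ = (A * M) * M⁻¹ := by rw [Matrix.mul_assoc]
    _ = -(D * M⁻¹) := by rw [hAM, Matrix.neg_mul]

/-- the transfer matrices solve the matrix continued fraction
`α_0 = -D_1 R_0⁻¹`, `α_n = -D_{n+1} (α_{n-1} U + R_n)⁻¹`, and consequently any
sequence of row vectors with `π_n = π_{n+1} α_n` satisfies the stationarity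
equations at `0` and in the interior. -/
theorem transfer_matrices_continued_fraction
    (Λ : ℕ) (hΛ : 1 ≤ Λ) (μ : ℝ) (hμ : 0 < μ) (ν g κ : ℕ → ℝ)
    (hν0 : ν 0 = 0) (hν : ∀ n, 1 ≤ n → n ≤ Λ → 0 < ν n)
    (hg : ∀ n ≤ Λ, 0 < g n) (hκ : ∀ n ≤ Λ, 0 ≤ κ n) :
    (IsUnit (Rmat μ ν g κ 0) ∧
      alphaMat μ ν g κ 0 = -(Dmat ν 1 * (Rmat μ ν g κ 0)⁻¹)) ∧
    (∀ n, 0 < n → n < Λ →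
      IsUnit (alphaMat μ ν g κ (n - 1) * Umat μ + Rmat μ ν g κ n) ∧
      alphaMat μ ν g κ n =
        -(Dmat ν (n + 1) *
          (alphaMat μ ν g κ (n - 1) * Umat μ + Rmat μ ν g κ n)⁻¹)) ∧
    (∀ π : ℕ → (Fin 2 → ℝ), (∀ n < Λ, π n = π (n + 1) ᵥ* alphaMat μ ν g κ n) →
      (π 0 ᵥ* Rmat μ ν g κ 0 + π 1 ᵥ* Dmat ν 1 = 0) ∧
      (∀ n, 0 < n → n < Λ →
        π (n - 1) ᵥ* Umat μ + π n ᵥ* Rmat μ ν g κ n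
          + π (n + 1) ᵥ* Dmat ν (n + 1) = 0)) := by
  have hg0 : 0 < g 0 := hg 0 (Nat.zero_le _)
  have hμ' : μ ≠ 0 := hμ.ne'
  -- invertibility of R₀
  have hdet0 : IsUnit (Rmat μ ν g κ 0) := by
    rw [Matrix.isUnit_iff_isUnit_det]
    have : (Rmat μ ν g κ 0).det = g 0 * μ := by
      simp [Rmat, Matrix.det_fin_two_of]; ring
    rw [this]
    exact (mul_pos hg0 hμ).ne'.isUnit
  -- key product relation at 0
  have key0 : alphaMat μ ν g κ 0 * Rmat μ ν g κ 0 = -(Dmat ν 1) := by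
    ext i j
    fin_cases i <;> fin_cases j <;>
      simp [alphaMat, Rmat, Dmat, Umat, Matrix.mul_apply, Fin.sum_univ_succ] <;>
      field_simp <;> ring
  -- the combined matrix for interior n
  have hM : ∀ m : ℕ, alphaMat μ ν g κ m * Umat μ + Rmat μ ν g κ (m + 1) =
      !![-(g (m+1) + ν (m+1)), g (m+1) + ν (m+1); κ (m+1), -(κ (m+1) + μ)] := by
    intro m
    have h2 : alphaMat μ ν g κ m * Umat μ = !![0, ν (m+1); 0, ν (m+1)] := by
      unfold alphaMat Umat
      split <;> rename_i h
      · subst h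
        ext i j
        fin_cases i <;> fin_cases j <;>
          simp [Matrix.mul_apply, Fin.sum_univ_succ] <;> field_simp
      · ext i j
        fin_cases i <;> fin_cases j <;>
          simp [Matrix.mul_apply, Fin.sum_univ_succ] <;> field_simp
    rw [h2]
    have : Rmat μ ν g κ (m+1) = !![-(g (m+1) + ν (m+1)), g (m+1);
        κ (m+1), -(κ (m+1) + ν (m+1) + μ)] := by simp [Rmat]
    rw [this]
    ext i j
    fin_cases i <;> fin_cases j <;> simp <;> ring
  have hdetn : ∀ m : ℕ, m + 1 < Λ →
      IsUnit (alphaMat μ ν g κ m * Umat μ + Rmat μ ν g κ (m + 1)) := by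
    intro m hm
    rw [Matrix.isUnit_iff_isUnit_det, hM m]
    have hgp := hg (m+1) hm.le
    have hνp := hν (m+1) (Nat.le_add_left 1 m) hm.le
    have : (!![-(g (m+1) + ν (m+1)), g (m+1) + ν (m+1);
        κ (m+1), -(κ (m+1) + μ)] : Matrix (Fin 2) (Fin 2) ℝ).det
        = (g (m+1) + ν (m+1)) * μ := by
      simp [Matrix.det_fin_two_of]; ring
    rw [this]
    exact (mul_pos (by linarith) hμ).ne'.isUnit
  have keyn : ∀ m : ℕ, m + 1 < Λ →
      alphaMat μ ν g κ (m + 1) * (alphaMat μ ν g κ m * Umat μ + Rmat μ ν g κ (m + 1))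
        = -(Dmat ν (m + 2)) := by
    intro m hm
    rw [hM m]
    have hgp := hg (m+1) hm.le
    have hνp := hν (m+1) (Nat.le_add_left 1 m) hm.le
    have hgν : g (m+1) + ν (m+1) ≠ 0 := by positivity
    have hα : alphaMat μ ν g κ (m+1) =
        (ν (m + 2) / μ) • !![(κ (m+1) + μ) / (g (m+1) + ν (m+1)), 1;
          κ (m+1) / (g (m+1) + ν (m+1)), 1] := by
      simp [alphaMat]
    rw [hα]
    ext i j
    fin_cases i <;> fin_cases j <;>
      simp [Dmat, Matrix.mul_apply, Fin.sum_univ_succ] <;>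
      field_simp <;> ring
  refine ⟨⟨hdet0, aux_inv_eq _ _ _ hdet0 key0⟩, ?_, ?_⟩
  · intro n hn hnΛ
    obtain ⟨m, rfl⟩ := Nat.exists_eq_add_of_lt hn
    simp only [Nat.zero_add] at *
    have h1 : m + 1 - 1 = m := rfl
    rw [h1]
    exact ⟨hdetn m hnΛ, aux_inv_eq _ _ _ (hdetn m hnΛ) (by simpa using keyn m hnΛ)⟩
  · intro π hπ
    constructor
    · have h0 := hπ 0 (by omega)
      rw [h0, Matrix.vecMul_vecMul, key0]
      simp [Matrix.vecMul_neg]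
    · intro n hn hnΛ
      obtain ⟨m, rfl⟩ := Nat.exists_eq_add_of_lt hn
      simp only [Nat.zero_add] at *
      have h1 : m + 1 - 1 = m := rfl
      rw [h1]
      have hm1 := hπ m (by omega)
      have hm2 := hπ (m + 1) hnΛ
      rw [hm1, hm2]
      simp only [Matrix.vecMul_vecMul, ← Matrix.vecMul_add, ← Matrix.mul_assoc]
      rw [Matrix.mul_assoc, ← Matrix.mul_add, keyn m hnΛ]
      simp [Matrix.vecMul_neg]
end
end

section
/- Assume k := inf_{n ≥ 1} ν(n)/(n μ) > 0. For each Λ, let π^{(Λ)} = (π_n^{(Λ)}(y))_{0 ≤ n ≤ Λ, y ∈ {0,1}} be the stationary probability vector given by the transfer-matrix formula (π_n^{(Λ)} = w_Λ α_{Λ-1} ⋯ α_n / Z_Λ for n < Λ and π_Λ^{(Λ)} = w_Λ/Z_Λ), extended by zero to ℕ × {0,1}. Then: (i) π_n^{(Λ)}(0) + π_n^{(Λ)}(1) ≤ 1/(n! kⁿ) for all n ≥ 1, uniformly in Λ; and (ii) as Λ → ∞, π^{(Λ)} converges pointwise on ℕ × {0,1} to a probability distribution π^{(∞)} which satisfies,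 for every n ≥ 0, the full-space stationarity equations π^{(∞)}_{n+1} D_{n+1} + π^{(∞)}_n R_n + π^{(∞)}_{n-1} U = 0 (with the convention π^{(∞)}_{-1} = 0, R_0 as the boundary matrix and R_n the interior matrix for n ≥ 1). -/
open Matrix Finset Filter

noncomputable section

/-- The row vector `w_Λ = (κ(Λ), g(Λ)+ν(Λ))`. -/
def wvec (ν g κ : ℕ → ℝ) (Λ : ℕ) : Fin 2 → ℝ := ![κ Λ, g Λ + ν Λ]

/-- `pv k = w_Λ α_{Λ-1} ⋯ α_{Λ-k}`, so that `pv (Λ - n) = w_Λ α_{Λ-1} ⋯ α_n`. -/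
def pv (μ : ℝ) (ν g κ : ℕ → ℝ) (Λ : ℕ) : ℕ → (Fin 2 → ℝ)
  | 0 => wvec ν g κ Λ
  | k + 1 => (pv μ ν g κ Λ k) ᵥ* alphaMat μ ν g κ (Λ - 1 - k)

/-- The normalization constant `Z_Λ`. -/
def Zconst (μ : ℝ) (ν g κ : ℕ → ℝ) (Λ : ℕ) : ℝ :=
  ∑ k ∈ Finset.range (Λ + 1), (pv μ ν g κ Λ k 0 + pv μ ν g κ Λ k 1)

/-- The stationary distribution `π^{(Λ)}` on `{0,…,Λ} × {0,1}`, extended by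
zero to `ℕ × {0,1}`. -/
def piL (μ : ℝ) (ν g κ : ℕ → ℝ) (Λ n : ℕ) : Fin 2 → ℝ :=
  if n ≤ Λ then (Zconst μ ν g κ Λ)⁻¹ • pv μ ν g κ Λ (Λ - n) else 0

-- ## Auxiliary development

/-- Bundled hypotheses. -/
structure CVHyp (μ : ℝ) (ν g κ : ℕ → ℝ) (k : ℝ) : Prop where
  hμ : 0 < μ
  hν0 : ν 0 = 0
  hν : ∀ n, 1 ≤ n → 0 < ν n
  hg : ∀ n, 0 < g n
  hκ : ∀ n, 0 ≤ κ n
  hkpos : 0 < k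
  hkle : ∀ n : ℕ, 1 ≤ n → k * (↑n * μ) ≤ ν n

namespace CV

variable {μ k : ℝ} {ν g κ : ℕ → ℝ}

def den (ν g : ℕ → ℝ) (n : ℕ) : ℝ := if n = 0 then g 0 else g n + ν n

def aa (μ : ℝ) (ν g κ : ℕ → ℝ) (n : ℕ) : ℝ := (κ n + μ) / den ν g n

def bb (ν g κ : ℕ → ℝ) (n : ℕ) : ℝ := κ n / den ν g n

def ff (μ : ℝ) (ν : ℕ → ℝ) (n : ℕ) : ℝ := ν (n + 1) / μ

lemma den_pos (H : CVHyp μ ν g κ k) (n : ℕ) : 0 < den ν g n := by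
  unfold den; split
  · exact H.hg 0
  · rename_i h
    have := H.hν n (Nat.one_le_iff_ne_zero.2 h)
    linarith [H.hg n]

lemma nu_nonneg (H : CVHyp μ ν g κ k) (n : ℕ) : 0 ≤ ν n := by
  rcases Nat.eq_zero_or_pos n with h | h
  · simp [h, H.hν0]
  · exact (H.hν n h).le

lemma aa_pos (H : CVHyp μ ν g κ k) (n : ℕ) : 0 < aa μ ν g κ n :=
  div_pos (by linarith [H.hκ n, H.hμ]) (den_pos H n)

lemma bb_nonneg (H : CVHyp μ ν g κ k) (n : ℕ) : 0 ≤ bb ν g κ n :=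
  div_nonneg (H.hκ n) (den_pos H n).le

lemma ff_pos (H : CVHyp μ ν g κ k) (n : ℕ) : 0 < ff μ ν n :=
  div_pos (H.hν (n+1) (Nat.le_add_left 1 n)) H.hμ

lemma aa_sub_bb (H : CVHyp μ ν g κ k) (n : ℕ) :
    aa μ ν g κ n - bb ν g κ n = μ / den ν g n := by
  rw [aa, bb, div_sub_div_same, add_sub_cancel_left]

lemma bb_le_aa (H : CVHyp μ ν g κ k) (n : ℕ) : bb ν g κ n ≤ aa μ ν g κ n := by
  have := aa_sub_bb H n
  have h2 : 0 ≤ μ / den ν g n := div_nonneg H.hμ.le (den_pos H n).le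
  linarith

lemma ff_ge (H : CVHyp μ ν g κ k) (n : ℕ) : k * (n + 1) ≤ ff μ ν n := by
  have h := H.hkle (n+1) (Nat.le_add_left 1 n)
  rw [ff, le_div_iff₀ H.hμ]
  push_cast at h ⊢
  nlinarith [H.hμ]

lemma lip_le (H : CVHyp μ ν g κ k) (n : ℕ) (hn : 1 ≤ n) :
    aa μ ν g κ n - bb ν g κ n ≤ 1 / (k * n) := by
  rw [aa_sub_bb H n]
  have hn0 : n ≠ 0 := Nat.one_le_iff_ne_zero.1 hn
  have hd : den ν g n = g n + ν n := by unfold den; simp [hn0]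
  have hν' := H.hν n hn
  have hg' := H.hg n
  have hkn : 0 < k * n := mul_pos H.hkpos (by exact_mod_cast Nat.pos_of_ne_zero hn0)
  rw [hd, div_le_div_iff₀ (by linarith) hkn]
  have := H.hkle n hn
  nlinarith

/-- `alphaMat` in terms of `aa`, `bb`, `ff`. -/
lemma alphaMat_eq (n : ℕ) :
    alphaMat μ ν g κ n = ff μ ν n • !![aa μ ν g κ n, 1; bb ν g κ n, 1] := by
  rcases Nat.eq_zero_or_pos n with h | h
  · subst h; simp [alphaMat, aa, bb, ff, den]
  · have hn0 : n ≠ 0 := Nat.pos_iff_ne_zero.1 h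
    simp [alphaMat, aa, bb, ff, den, hn0]

lemma vecMul_alpha_zero (v : Fin 2 → ℝ) (n : ℕ) :
    (v ᵥ* alphaMat μ ν g κ n) 0 = ff μ ν n * (v 0 * aa μ ν g κ n + v 1 * bb ν g κ n) := by
  rw [alphaMat_eq]
  simp [vecMul, dotProduct, Fin.sum_univ_two]
  ring

lemma vecMul_alpha_one (v : Fin 2 → ℝ) (n : ℕ) :
    (v ᵥ* alphaMat μ ν g κ n) 1 = ff μ ν n * (v 0 + v 1) := by
  rw [alphaMat_eq]
  simp [vecMul, dotProduct, Fin.sum_univ_two]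
  ring

/-- Sum of components of the level-`n` unnormalized vector (valid for `n ≤ Λ`). -/
def sfun (μ : ℝ) (ν g κ : ℕ → ℝ) (Λ n : ℕ) : ℝ :=
  pv μ ν g κ Λ (Λ - n) 0 + pv μ ν g κ Λ (Λ - n) 1

/-- Direction (fraction of mass on promoter state 0) at level `n`. -/
def θfun (μ : ℝ) (ν g κ : ℕ → ℝ) (Λ n : ℕ) : ℝ :=
  pv μ ν g κ Λ (Λ - n) 0 / sfun μ ν g κ Λ n

lemma pv_level_step {Λ n : ℕ} (h : n < Λ) :
    pv μ ν g κ Λ (Λ - n) = pv μ ν g κ Λ (Λ - (n+1)) ᵥ* alphaMat μ ν g κ n := by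
  have h1 : Λ - n = (Λ - (n+1)) + 1 := by omega
  rw [h1]
  show pv μ ν g κ Λ (Λ - (n+1)) ᵥ* alphaMat μ ν g κ (Λ - 1 - (Λ - (n+1))) = _
  rw [show Λ - 1 - (Λ - (n+1)) = n from by omega]

lemma pv_nonneg (H : CVHyp μ ν g κ k) (Λ : ℕ) :
    ∀ j, j ≤ Λ → 0 ≤ pv μ ν g κ Λ j 0 ∧ 0 < pv μ ν g κ Λ j 1 := by
  intro j
  induction j with
  | zero =>
    intro _
    constructor
    · exact H.hκ Λ
    · show 0 < g Λ + ν Λ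
      linarith [H.hg Λ, nu_nonneg H Λ]
  | succ j ih =>
    intro hj
    obtain ⟨h0, h1⟩ := ih (by omega)
    show 0 ≤ (pv μ ν g κ Λ j ᵥ* alphaMat μ ν g κ (Λ - 1 - j)) 0 ∧
        0 < (pv μ ν g κ Λ j ᵥ* alphaMat μ ν g κ (Λ - 1 - j)) 1
    rw [vecMul_alpha_zero, vecMul_alpha_one]
    set m := Λ - 1 - j
    constructor
    · apply mul_nonneg (ff_pos H m).le
      have := aa_pos H m
      have := bb_nonneg H m
      nlinarith
    · apply mul_pos (ff_pos H m)
      linarith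

lemma sfun_pos (H : CVHyp μ ν g κ k) {Λ n : ℕ} (h : n ≤ Λ) :
    0 < sfun μ ν g κ Λ n := by
  obtain ⟨h0, h1⟩ := pv_nonneg H Λ (Λ - n) (by omega)
  unfold sfun; linarith

lemma θ_mem (H : CVHyp μ ν g κ k) {Λ n : ℕ} (h : n ≤ Λ) :
    θfun μ ν g κ Λ n ∈ Set.Icc (0:ℝ) 1 := by
  obtain ⟨h0, h1⟩ := pv_nonneg H Λ (Λ - n) (by omega)
  have hs := sfun_pos H h
  rw [Set.mem_Icc, θfun]
  constructor
  · exact div_nonneg h0 hs.le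
  · rw [div_le_one hs]
    unfold sfun; linarith

lemma pv_comp0 (H : CVHyp μ ν g κ k) {Λ n : ℕ} (h : n ≤ Λ) :
    pv μ ν g κ Λ (Λ - n) 0 = θfun μ ν g κ Λ n * sfun μ ν g κ Λ n := by
  rw [θfun, div_mul_cancel₀]
  exact (sfun_pos H h).ne'

lemma pv_comp1 (H : CVHyp μ ν g κ k) {Λ n : ℕ} (h : n ≤ Λ) :
    pv μ ν g κ Λ (Λ - n) 1 = (1 - θfun μ ν g κ Λ n) * sfun μ ν g κ Λ n := by
  have h0 := pv_comp0 H h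
  have hs : sfun μ ν g κ Λ n = pv μ ν g κ Λ (Λ - n) 0 + pv μ ν g κ Λ (Λ - n) 1 := rfl
  nlinarith [h0, hs]

/-- The direction map. -/
def Φf (μ : ℝ) (ν g κ : ℕ → ℝ) (n : ℕ) (θ : ℝ) : ℝ :=
  (θ * aa μ ν g κ n + (1-θ) * bb ν g κ n) / (θ * aa μ ν g κ n + (1-θ) * bb ν g κ n + 1)

/-- The mass-ratio map. -/
def ρf (μ : ℝ) (ν g κ : ℕ → ℝ) (n : ℕ) (θ : ℝ) : ℝ :=
  ff μ ν n * (θ * aa μ ν g κ n + (1-θ) * bb ν g κ n + 1)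

lemma hcomb_nonneg (H : CVHyp μ ν g κ k) (n : ℕ) {θ : ℝ} (hθ : θ ∈ Set.Icc (0:ℝ) 1) :
    0 ≤ θ * aa μ ν g κ n + (1-θ) * bb ν g κ n := by
  obtain ⟨h0, h1⟩ := hθ
  have := aa_pos H n
  have := bb_nonneg H n
  nlinarith

lemma Φ_mem (H : CVHyp μ ν g κ k) (n : ℕ) {θ : ℝ} (hθ : θ ∈ Set.Icc (0:ℝ) 1) :
    Φf μ ν g κ n θ ∈ Set.Icc (0:ℝ) 1 := by
  have hh := hcomb_nonneg H n hθ
  rw [Set.mem_Icc, Φf]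
  constructor
  · exact div_nonneg hh (by linarith)
  · rw [div_le_one (by linarith)]
    linarith

lemma ρ_ge (H : CVHyp μ ν g κ k) (n : ℕ) {θ : ℝ} (hθ : θ ∈ Set.Icc (0:ℝ) 1) :
    ff μ ν n ≤ ρf μ ν g κ n θ := by
  have hh := hcomb_nonneg H n hθ
  have hf := ff_pos H n
  rw [ρf]
  nlinarith

lemma ρ_pos (H : CVHyp μ ν g κ k) (n : ℕ) {θ : ℝ} (hθ : θ ∈ Set.Icc (0:ℝ) 1) :
    0 < ρf μ ν g κ n θ := lt_of_lt_of_le (ff_pos H n) (ρ_ge H n hθ)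

lemma ρ_ge_k (H : CVHyp μ ν g κ k) (n : ℕ) {θ : ℝ} (hθ : θ ∈ Set.Icc (0:ℝ) 1) :
    k * (n+1) ≤ ρf μ ν g κ n θ := le_trans (ff_ge H n) (ρ_ge H n hθ)

/-- Recursion for the direction. -/
lemma θ_rec (H : CVHyp μ ν g κ k) {Λ n : ℕ} (h : n < Λ) :
    θfun μ ν g κ Λ n = Φf μ ν g κ n (θfun μ ν g κ Λ (n+1)) := by
  have h1 : n + 1 ≤ Λ := h
  obtain ⟨hx, hy⟩ := pv_nonneg H Λ (Λ - (n+1)) (by omega)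
  set x := pv μ ν g κ Λ (Λ - (n+1)) 0 with hxdef
  set y := pv μ ν g κ Λ (Λ - (n+1)) 1 with hydef
  have hspos : (0:ℝ) < x + y := by linarith
  have hθ' : θfun μ ν g κ Λ (n+1) = x / (x + y) := rfl
  have hf := ff_pos H n
  have ha := aa_pos H n
  have hb := bb_nonneg H n
  set A := aa μ ν g κ n with hA
  set B := bb ν g κ n with hB
  have hC : 0 ≤ x * A + y * B := by nlinarith
  have key0 : pv μ ν g κ Λ (Λ - n) 0 = ff μ ν n * (x * A + y * B) := by
    rw [pv_level_step h, vecMul_alpha_zero]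
  have key1 : pv μ ν g κ Λ (Λ - n) 1 = ff μ ν n * (x + y) := by
    rw [pv_level_step h, vecMul_alpha_one]
  have hsn : sfun μ ν g κ Λ n = ff μ ν n * (x * A + y * B) + ff μ ν n * (x + y) := by
    rw [sfun, key0, key1]
  have hE : x/(x+y) * A + (1 - x/(x+y)) * B = (x * A + y * B)/(x+y) := by
    field_simp
    try ring
  rw [θfun, hsn, key0, hθ', Φf, hE]
  have hd1 : (0:ℝ) < ff μ ν n * (x * A + y * B) + ff μ ν n * (x + y) := by nlinarith
  have hd2 : (0:ℝ) < (x * A + y * B)/(x+y) + 1 := by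
    have : 0 ≤ (x * A + y * B)/(x+y) := div_nonneg hC hspos.le
    linarith
  rw [div_eq_div_iff hd1.ne' hd2.ne']
  field_simp
  try ring

/-- Recursion for the mass. -/
lemma s_rec (H : CVHyp μ ν g κ k) {Λ n : ℕ} (h : n < Λ) :
    sfun μ ν g κ Λ n = ρf μ ν g κ n (θfun μ ν g κ Λ (n+1)) * sfun μ ν g κ Λ (n+1) := by
  have h1 : n + 1 ≤ Λ := h
  obtain ⟨hx, hy⟩ := pv_nonneg H Λ (Λ - (n+1)) (by omega)
  set x := pv μ ν g κ Λ (Λ - (n+1)) 0 with hxdef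
  set y := pv μ ν g κ Λ (Λ - (n+1)) 1 with hydef
  have hspos : (0:ℝ) < x + y := by linarith
  have hθ' : θfun μ ν g κ Λ (n+1) = x / (x + y) := rfl
  have key0 : pv μ ν g κ Λ (Λ - n) 0 = ff μ ν n * (x * aa μ ν g κ n + y * bb ν g κ n) := by
    rw [pv_level_step h, vecMul_alpha_zero]
  have key1 : pv μ ν g κ Λ (Λ - n) 1 = ff μ ν n * (x + y) := by
    rw [pv_level_step h, vecMul_alpha_one]
  have hs : sfun μ ν g κ Λ (n+1) = x + y := rfl
  rw [sfun, key0, key1, ρf, hθ', hs]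
  field_simp
  try ring
/-- Lipschitz estimate for the direction map. -/
lemma Φ_lip (H : CVHyp μ ν g κ k) (n : ℕ) {θ θ' : ℝ}
    (hθ : θ ∈ Set.Icc (0:ℝ) 1) (hθ' : θ' ∈ Set.Icc (0:ℝ) 1) :
    |Φf μ ν g κ n θ - Φf μ ν g κ n θ'| ≤ (aa μ ν g κ n - bb ν g κ n) * |θ - θ'| := by
  have h1 := hcomb_nonneg H n hθ
  have h2 := hcomb_nonneg H n hθ'
  set h := θ * aa μ ν g κ n + (1-θ) * bb ν g κ n with hh
  set h' := θ' * aa μ ν g κ n + (1-θ') * bb ν g κ n with hh'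
  have e1 : Φf μ ν g κ n θ - Φf μ ν g κ n θ' = (h - h') / ((h+1) * (h'+1)) := by
    rw [Φf, Φf, ← hh, ← hh']
    field_simp
    ring
  rw [e1, abs_div]
  have e2 : h - h' = (θ - θ') * (aa μ ν g κ n - bb ν g κ n) := by rw [hh, hh']; ring
  have hab : 0 ≤ aa μ ν g κ n - bb ν g κ n := by linarith [bb_le_aa H n]
  have e3 : |h - h'| = (aa μ ν g κ n - bb ν g κ n) * |θ - θ'| := by
    rw [e2, abs_mul, abs_of_nonneg hab, mul_comm]
  rw [e3]
  have hd : (1:ℝ) ≤ (h+1) * (h'+1) := by nlinarith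
  have hd' : |(h+1) * (h'+1)| = (h+1)*(h'+1) := abs_of_pos (by nlinarith)
  rw [hd']
  exact div_le_self (by positivity) hd

/-- Contraction estimate between two system sizes. -/
lemma θ_diff (H : CVHyp μ ν g κ k) :
    ∀ d n Λ Λ', Λ = n + d → Λ ≤ Λ' →
      |θfun μ ν g κ Λ' n - θfun μ ν g κ Λ n| ≤
        ∏ m ∈ Finset.Ico n Λ, (aa μ ν g κ m - bb ν g κ m) := by
  intro d
  induction d with
  | zero =>
    intro n Λ Λ' hΛ hle
    rw [show Λ = n from by omega]
    simp only [Finset.Ico_self, Finset.prod_empty]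
    have a := θ_mem (Λ := n) (n := n) H le_rfl
    have b := θ_mem (Λ := Λ') (n := n) H (show n ≤ Λ' by omega)
    rw [Set.mem_Icc] at a b
    rw [abs_le]
    constructor <;> linarith [a.1, a.2, b.1, b.2]
  | succ d ih =>
    intro n Λ Λ' hΛ hle
    have hnΛ : n < Λ := by omega
    have hnΛ' : n < Λ' := by omega
    rw [θ_rec H hnΛ, θ_rec H hnΛ']
    have hm1 := θ_mem (Λ := Λ) (n := n+1) H (by omega)
    have hm2 := θ_mem (Λ := Λ') (n := n+1) H (by omega)
    calc |Φf μ ν g κ n (θfun μ ν g κ Λ' (n+1)) - Φf μ ν g κ n (θfun μ ν g κ Λ (n+1))|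
        ≤ (aa μ ν g κ n - bb ν g κ n) * |θfun μ ν g κ Λ' (n+1) - θfun μ ν g κ Λ (n+1)| :=
          Φ_lip H n hm2 hm1
      _ ≤ (aa μ ν g κ n - bb ν g κ n) * ∏ m ∈ Finset.Ico (n+1) Λ, (aa μ ν g κ m - bb ν g κ m) := by
          apply mul_le_mul_of_nonneg_left (ih (n+1) Λ Λ' (by omega) hle)
          linarith [bb_le_aa H n]
      _ = ∏ m ∈ Finset.Ico n Λ, (aa μ ν g κ m - bb ν g κ m) := by
          rw [Finset.prod_eq_prod_Ico_succ_bot hnΛ (f := fun m => aa μ ν g κ m - bb ν g κ m)]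

/-- The contraction product tends to zero. -/
lemma prod_lip_tendsto (H : CVHyp μ ν g κ k) (n : ℕ) :
    Tendsto (fun Λ => ∏ m ∈ Finset.Ico n Λ, (aa μ ν g κ m - bb ν g κ m)) atTop (nhds 0) := by
  obtain ⟨M0, hM0⟩ := exists_nat_ge (2 / k)
  set M := max (n+1) (M0+1) with hM
  have hMn : n ≤ M := le_trans (Nat.le_succ n) (le_max_left _ _)
  have hhalf : ∀ m, M ≤ m → aa μ ν g κ m - bb ν g κ m ≤ 1/2 := by
    intro m hm
    have hm1 : 1 ≤ m := by omega
    have h1 := lip_le H m hm1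
    have hmk : 2 / k ≤ (m:ℝ) := by
      calc (2:ℝ)/k ≤ M0 := hM0
        _ ≤ m := by exact_mod_cast Nat.le_of_lt_succ (by omega)
    have hk2 : 2 ≤ k * m := by
      rw [div_le_iff₀ H.hkpos] at hmk
      linarith [mul_comm k (m:ℝ)]
    have hkm : (0:ℝ) < k * m := by linarith
    calc aa μ ν g κ m - bb ν g κ m ≤ 1/(k*m) := h1
      _ ≤ 1/2 := by
        apply div_le_div_of_nonneg_left (by norm_num) (by norm_num) hk2
  have hnonneg : ∀ m, 0 ≤ aa μ ν g κ m - bb ν g κ m := fun m => by linarith [bb_le_aa H m]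
  set C := (∏ m ∈ Finset.Ico n M, (aa μ ν g κ m - bb ν g κ m)) * 2^M with hC
  have hbound : ∀ Λ, M ≤ Λ →
      ∏ m ∈ Finset.Ico n Λ, (aa μ ν g κ m - bb ν g κ m) ≤ C * (1/2)^Λ := by
    intro Λ hΛ
    rw [← Finset.prod_Ico_consecutive _ hMn hΛ]
    have h2 : ∏ m ∈ Finset.Ico M Λ, (aa μ ν g κ m - bb ν g κ m) ≤ (1/2:ℝ)^(Λ - M) := by
      calc ∏ m ∈ Finset.Ico M Λ, (aa μ ν g κ m - bb ν g κ m)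
          ≤ ∏ _m ∈ Finset.Ico M Λ, (1/2:ℝ) := by
            apply Finset.prod_le_prod (fun m _ => hnonneg m)
            intro m hm
            exact hhalf m (Finset.mem_Ico.1 hm).1
        _ = (1/2:ℝ)^(Λ - M) := by rw [Finset.prod_const, Nat.card_Ico]
    have h2M : ((1:ℝ)/2)^M * 2^M = 1 := by
      rw [← mul_pow]
      norm_num
    have h3 : ((1:ℝ)/2)^(Λ - M) = (1/2)^Λ * 2^M := by
      calc ((1:ℝ)/2)^(Λ - M) = (1/2)^(Λ - M) * ((1/2)^M * 2^M) := by rw [h2M, mul_one]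
        _ = (1/2)^Λ * 2^M := by
            rw [← mul_assoc, ← pow_add, show Λ - M + M = Λ from by omega]
    have hprodM : 0 ≤ ∏ m ∈ Finset.Ico n M, (aa μ ν g κ m - bb ν g κ m) :=
      Finset.prod_nonneg (fun m _ => hnonneg m)
    calc (∏ m ∈ Finset.Ico n M, (aa μ ν g κ m - bb ν g κ m)) *
          ∏ m ∈ Finset.Ico M Λ, (aa μ ν g κ m - bb ν g κ m)
        ≤ (∏ m ∈ Finset.Ico n M, (aa μ ν g κ m - bb ν g κ m)) * (1/2)^(Λ - M) :=
          mul_le_mul_of_nonneg_left h2 hprodM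
      _ = C * (1/2)^Λ := by rw [h3, hC]; ring
  have hCz : Tendsto (fun Λ : ℕ => C * (1/2:ℝ)^Λ) atTop (nhds 0) := by
    have := tendsto_pow_atTop_nhds_zero_of_lt_one (by norm_num : (0:ℝ) ≤ 1/2) (by norm_num)
    simpa using this.const_mul C
  apply squeeze_zero' (Filter.Eventually.of_forall
    (fun Λ => Finset.prod_nonneg (fun m _ => hnonneg m)))
    (Filter.eventually_atTop.2 ⟨M, hbound⟩) hCz

/-- Mass growth: `s₀ ≥ k^n n! s_n`. -/
lemma s_growth (H : CVHyp μ ν g κ k) {Λ : ℕ} :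
    ∀ n, n ≤ Λ → k^n * (Nat.factorial n) * sfun μ ν g κ Λ n ≤ sfun μ ν g κ Λ 0 := by
  intro n
  induction n with
  | zero => intro _; simp
  | succ n ih =>
    intro hn
    have hrec := s_rec H (show n < Λ by omega)
    have hθm := θ_mem (Λ := Λ) (n := n+1) H hn
    have hρ := ρ_ge_k H n hθm
    have hs1 := sfun_pos H hn
    have hfac : (0:ℝ) < k^n * (Nat.factorial n) :=
      mul_pos (pow_pos H.hkpos n) (by exact_mod_cast Nat.factorial_pos n)
    have h2 : k * (n+1) * sfun μ ν g κ Λ (n+1) ≤ sfun μ ν g κ Λ n := by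
      rw [hrec]
      apply mul_le_mul_of_nonneg_right hρ hs1.le
    calc k^(n+1) * (Nat.factorial (n+1)) * sfun μ ν g κ Λ (n+1)
        = (k^n * (Nat.factorial n)) * (k * (n+1) * sfun μ ν g κ Λ (n+1)) := by
          rw [Nat.factorial_succ]
          push_cast
          ring
      _ ≤ (k^n * (Nat.factorial n)) * sfun μ ν g κ Λ n :=
          mul_le_mul_of_nonneg_left h2 hfac.le
      _ ≤ sfun μ ν g κ Λ 0 := ih (by omega)

/-- `Zconst` as a sum of level masses. -/
lemma Z_eq (Λ : ℕ) :
    Zconst μ ν g κ Λ = ∑ n ∈ Finset.range (Λ+1), sfun μ ν g κ Λ n := by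
  rw [Zconst, ← Finset.sum_range_reflect]
  apply Finset.sum_congr rfl
  intro j hj
  rw [Finset.mem_range] at hj
  show pv μ ν g κ Λ (Λ + 1 - 1 - j) 0 + pv μ ν g κ Λ (Λ + 1 - 1 - j) 1 = sfun μ ν g κ Λ j
  rw [sfun, show Λ + 1 - 1 - j = Λ - j from by omega]

lemma Z_ge (H : CVHyp μ ν g κ k) {Λ n : ℕ} (h : n ≤ Λ) :
    sfun μ ν g κ Λ n ≤ Zconst μ ν g κ Λ := by
  rw [Z_eq]
  apply Finset.single_le_sum (f := fun n => sfun μ ν g κ Λ n)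
  · intro i hi
    rw [Finset.mem_range] at hi
    exact (sfun_pos H (by omega : i ≤ Λ)).le
  · rw [Finset.mem_range]; omega

lemma Z_pos (H : CVHyp μ ν g κ k) (Λ : ℕ) : 0 < Zconst μ ν g κ Λ :=
  lt_of_lt_of_le (sfun_pos H (le_refl Λ)) (Z_ge H (le_refl Λ))

/-- Part (i): the uniform factorial bound. -/
lemma part_one (H : CVHyp μ ν g κ k) (Λ : ℕ) (n : ℕ) (hn : 1 ≤ n) :
    piL μ ν g κ Λ n 0 + piL μ ν g κ Λ n 1 ≤ 1 / (Nat.factorial n * k ^ n) := by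
  have hfac : (0:ℝ) < (Nat.factorial n) * k^n :=
    mul_pos (by exact_mod_cast Nat.factorial_pos n) (pow_pos H.hkpos n)
  by_cases hΛ : n ≤ Λ
  · have hZ := Z_pos H Λ
    have hsn := sfun_pos H hΛ
    have hs0 : k^n * (Nat.factorial n) * sfun μ ν g κ Λ n ≤ sfun μ ν g κ Λ 0 :=
      s_growth H n hΛ
    have hZ0 : sfun μ ν g κ Λ 0 ≤ Zconst μ ν g κ Λ := Z_ge H (by omega)
    have hsum : piL μ ν g κ Λ n 0 + piL μ ν g κ Λ n 1 =
        sfun μ ν g κ Λ n / Zconst μ ν g κ Λ := by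
      rw [piL, if_pos hΛ]
      show (Zconst μ ν g κ Λ)⁻¹ * pv μ ν g κ Λ (Λ - n) 0 +
        (Zconst μ ν g κ Λ)⁻¹ * pv μ ν g κ Λ (Λ - n) 1 = _
      rw [sfun, div_eq_inv_mul]
      ring
    rw [hsum, div_le_div_iff₀ hZ hfac]
    calc sfun μ ν g κ Λ n * (↑(Nat.factorial n) * k^n)
        = k^n * (Nat.factorial n) * sfun μ ν g κ Λ n := by ring
      _ ≤ sfun μ ν g κ Λ 0 := hs0
      _ ≤ Zconst μ ν g κ Λ := hZ0
      _ = 1 * Zconst μ ν g κ Λ := by ring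
  · rw [piL, if_neg hΛ]
    simp only [Pi.zero_apply, add_zero]
    positivity
/-- Product of inverse mass-ratios along a direction profile `t`. -/
def Rfn (μ : ℝ) (ν g κ : ℕ → ℝ) (t : ℕ → ℝ) (n : ℕ) : ℝ :=
  ∏ i ∈ Finset.range n, (ρf μ ν g κ i (t (i+1)))⁻¹

lemma Rfn_pos (H : CVHyp μ ν g κ k) {t : ℕ → ℝ} {n : ℕ}
    (ht : ∀ j, j ≤ n → t j ∈ Set.Icc (0:ℝ) 1) : 0 < Rfn μ ν g κ t n := by
  apply Finset.prod_pos
  intro i hi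
  rw [Finset.mem_range] at hi
  exact inv_pos.2 (ρ_pos H i (ht (i+1) (by omega)))

lemma prod_k_inv (H : CVHyp μ ν g κ k) (n : ℕ) :
    ∏ i ∈ Finset.range n, (k * (i+1))⁻¹ = 1 / (Nat.factorial n * k^n) := by
  induction n with
  | zero => simp
  | succ n ih =>
    rw [Finset.prod_range_succ, ih, Nat.factorial_succ]
    have h1 : (Nat.factorial n : ℝ) ≠ 0 := by exact_mod_cast (Nat.factorial_pos n).ne'
    have h2 : k ≠ 0 := H.hkpos.ne'
    have h3 : ((n:ℝ) + 1) ≠ 0 := by positivity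
    push_cast
    field_simp
    ring

lemma Rfn_le (H : CVHyp μ ν g κ k) {t : ℕ → ℝ} {n : ℕ}
    (ht : ∀ j, j ≤ n → t j ∈ Set.Icc (0:ℝ) 1) :
    Rfn μ ν g κ t n ≤ 1 / (Nat.factorial n * k^n) := by
  rw [← prod_k_inv H n, Rfn]
  apply Finset.prod_le_prod
  · intro i hi
    rw [Finset.mem_range] at hi
    exact (inv_pos.2 (ρ_pos H i (ht (i+1) (by omega)))).le
  · intro i hi
    rw [Finset.mem_range] at hi
    have hki : (0:ℝ) < k * (i+1) := by
      have : (0:ℝ) < (i:ℝ)+1 := by positivity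
      exact mul_pos H.hkpos this
    exact inv_anti₀ hki (by exact_mod_cast ρ_ge_k H i (ht (i+1) (by omega)))

lemma sfun_eq_Rfn (H : CVHyp μ ν g κ k) {Λ : ℕ} :
    ∀ n, n ≤ Λ → sfun μ ν g κ Λ n = Rfn μ ν g κ (θfun μ ν g κ Λ) n * sfun μ ν g κ Λ 0 := by
  intro n
  induction n with
  | zero => intro _; rw [Rfn]; simp
  | succ n ih =>
    intro hn
    have hlt : n < Λ := by omega
    have hρ := ρ_pos H n (θ_mem (Λ := Λ) (n := n+1) H hn)
    have hrec := s_rec H hlt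
    have : sfun μ ν g κ Λ (n+1) = (ρf μ ν g κ n (θfun μ ν g κ Λ (n+1)))⁻¹ * sfun μ ν g κ Λ n := by
      rw [hrec]
      field_simp
    rw [this, ih (by omega)]
    simp only [Rfn, Finset.prod_range_succ]
    ring

lemma Z_eq_Rfn (H : CVHyp μ ν g κ k) (Λ : ℕ) :
    Zconst μ ν g κ Λ =
      (∑ n ∈ Finset.range (Λ+1), Rfn μ ν g κ (θfun μ ν g κ Λ) n) * sfun μ ν g κ Λ 0 := by
  rw [Z_eq, Finset.sum_mul]
  apply Finset.sum_congr rfl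
  intro n hn
  rw [Finset.mem_range] at hn
  exact sfun_eq_Rfn H n (by omega)

lemma T_pos (H : CVHyp μ ν g κ k) (Λ : ℕ) :
    0 < ∑ n ∈ Finset.range (Λ+1), Rfn μ ν g κ (θfun μ ν g κ Λ) n := by
  apply Finset.sum_pos
  · intro i hi
    rw [Finset.mem_range] at hi
    exact Rfn_pos H (fun j hj => θ_mem H (by omega))
  · exact ⟨0, Finset.mem_range.2 (by omega)⟩

lemma piL_eq (H : CVHyp μ ν g κ k) {Λ n : ℕ} (h : n ≤ Λ) (y : Fin 2) :
    piL μ ν g κ Λ n y =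
      Rfn μ ν g κ (θfun μ ν g κ Λ) n *
        (if y = 0 then θfun μ ν g κ Λ n else 1 - θfun μ ν g κ Λ n) /
        (∑ j ∈ Finset.range (Λ+1), Rfn μ ν g κ (θfun μ ν g κ Λ) j) := by
  have hs0 := sfun_pos H (show 0 ≤ Λ by omega)
  have hT := T_pos H Λ
  have hZR := Z_eq_Rfn H Λ
  rw [piL, if_pos h]
  show (Zconst μ ν g κ Λ)⁻¹ * pv μ ν g κ Λ (Λ - n) y = _
  have hpv : pv μ ν g κ Λ (Λ - n) y =
      (if y = 0 then θfun μ ν g κ Λ n else 1 - θfun μ ν g κ Λ n) * sfun μ ν g κ Λ n := by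
    fin_cases y
    · simpa using pv_comp0 H h
    · simpa using pv_comp1 H h
  rw [hpv, sfun_eq_Rfn H n h, hZR]
  field_simp

/-- `α_m ⬝ U = ν(m+1) • !![0,1;0,1]`. -/
lemma alpha_mul_U (H : CVHyp μ ν g κ k) (m : ℕ) :
    alphaMat μ ν g κ m * Umat μ = ν (m+1) • !![(0:ℝ),1;0,1] := by
  have hμ : μ ≠ 0 := H.hμ.ne'
  rcases Nat.eq_zero_or_pos m with hm | hm
  · subst hm
    ext i j
    fin_cases i <;> fin_cases j <;>
      simp [alphaMat, Umat, Matrix.mul_apply, Fin.sum_univ_two] <;> field_simp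
  · have hm0 : m ≠ 0 := by omega
    ext i j
    fin_cases i <;> fin_cases j <;>
      simp [alphaMat, Umat, Matrix.mul_apply, Fin.sum_univ_two, hm0] <;> field_simp

/-- Boundary matrix identity: `D₁ + α₀ R₀ = 0`. -/
lemma key_id0 (H : CVHyp μ ν g κ k) :
    Dmat ν 1 + alphaMat μ ν g κ 0 * Rmat μ ν g κ 0 = 0 := by
  have hμ : μ ≠ 0 := H.hμ.ne'
  have hg0 : g 0 ≠ 0 := (H.hg 0).ne'
  ext i j
  fin_cases i <;> fin_cases j <;>
    simp [Dmat, alphaMat, Rmat, Matrix.mul_apply, Fin.sum_univ_two] <;>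
    field_simp <;> ring

/-- Interior matrix identity: `D_{n+1} + αₙ Rₙ + αₙ (ν n • E) = 0` for `n ≥ 1`. -/
lemma key_idn (H : CVHyp μ ν g κ k) {n : ℕ} (hn : n ≠ 0) :
    Dmat ν (n+1) + alphaMat μ ν g κ n * Rmat μ ν g κ n +
      alphaMat μ ν g κ n * (ν n • !![(0:ℝ),1;0,1]) = 0 := by
  have hμ : μ ≠ 0 := H.hμ.ne'
  have hgν : g n + ν n ≠ 0 := by
    have := H.hg n
    have := nu_nonneg H n
    positivity
  ext i j
  fin_cases i <;> fin_cases j <;>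
    simp [Dmat, alphaMat, Rmat, Matrix.mul_apply, Fin.sum_univ_two, hn] <;>
    field_simp <;> ring
/-- Convergence of the level directions as `Λ → ∞`. -/
lemma theta_conv (H : CVHyp μ ν g κ k) (n : ℕ) :
    ∃ L, Tendsto (fun Λ => θfun μ ν g κ Λ n) atTop (nhds L) := by
  apply cauchySeq_tendsto_of_complete
  rw [Metric.cauchySeq_iff']
  intro ε hε
  have h1 : ∀ᶠ Λ in atTop,
      (∏ m ∈ Finset.Ico n Λ, (aa μ ν g κ m - bb ν g κ m)) < ε :=
    (prod_lip_tendsto H n).eventually_lt_const hε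
  obtain ⟨N0, hN0⟩ := Filter.eventually_atTop.1 h1
  refine ⟨max N0 n, fun m hm => ?_⟩
  rw [Real.dist_eq]
  have hn : n ≤ max N0 n := le_max_right _ _
  calc |θfun μ ν g κ m n - θfun μ ν g κ (max N0 n) n|
      ≤ ∏ j ∈ Finset.Ico n (max N0 n), (aa μ ν g κ j - bb ν g κ j) :=
        θ_diff H (max N0 n - n) n (max N0 n) m (by omega) hm
    _ < ε := hN0 _ (le_max_left _ _)

end CV

/-- Theorem `ConvLambda`: uniform bound
`π_n^{(Λ)}(0)+π_n^{(Λ)}(1) ≤ 1/(n! kⁿ)`, and convergence as `Λ → ∞` of `π^{(Λ)}`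
to a probability distribution `π^{(∞)}` satisfying the full-space stationarity
equations. -/
theorem convergence_of_steady_states
    (μ : ℝ) (hμ : 0 < μ) (ν g κ : ℕ → ℝ)
    (hν0 : ν 0 = 0) (hν : ∀ n, 1 ≤ n → 0 < ν n)
    (hg : ∀ n, 0 < g n) (hκ : ∀ n, 0 ≤ κ n)
    (k : ℝ) (hk : k = sInf ((fun n : ℕ => ν n / (n * μ)) '' {n : ℕ | 1 ≤ n}))
    (hkpos : 0 < k) :
    (∀ Λ : ℕ, 1 ≤ Λ → ∀ n : ℕ, 1 ≤ n →
      piL μ ν g κ Λ n 0 + piL μ ν g κ Λ n 1 ≤ 1 / (n.factorial * k ^ n)) ∧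
    (∃ piInf : ℕ → (Fin 2 → ℝ),
      (∀ n : ℕ, ∀ y : Fin 2,
        Tendsto (fun Λ : ℕ => piL μ ν g κ Λ n y) atTop (nhds (piInf n y))) ∧
      (∀ n : ℕ, ∀ y : Fin 2, 0 ≤ piInf n y) ∧
      (∑' n : ℕ, (piInf n 0 + piInf n 1)) = 1 ∧
      (∀ n : ℕ,
        piInf (n + 1) ᵥ* Dmat ν (n + 1) + piInf n ᵥ* Rmat μ ν g κ n +
          (if n = 0 then 0 else piInf (n - 1)) ᵥ* Umat μ = 0)) := by
  -- Build the hypothesis bundle.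
  have hkle : ∀ n : ℕ, 1 ≤ n → k * (↑n * μ) ≤ ν n := by
    intro n hn
    have hnμ : (0:ℝ) < (n:ℝ) * μ := by
      have : (0:ℝ) < (n:ℝ) := by exact_mod_cast hn
      exact mul_pos this hμ
    have hmem : ν n / (n * μ) ∈ ((fun n : ℕ => ν n / (n * μ)) '' {n : ℕ | 1 ≤ n}) :=
      ⟨n, hn, rfl⟩
    have hbdd : BddBelow ((fun n : ℕ => ν n / (n * μ)) '' {n : ℕ | 1 ≤ n}) := by
      refine ⟨0, fun x hx => ?_⟩
      obtain ⟨m, hm, rfl⟩ := hx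
      have hm1 : (0:ℝ) < (m:ℝ) * μ := by
        have : (0:ℝ) < (m:ℝ) := by exact_mod_cast hm
        exact mul_pos this hμ
      exact div_nonneg (hν m hm).le hm1.le
    have hle : k ≤ ν n / (n * μ) := hk ▸ csInf_le hbdd hmem
    rw [le_div_iff₀ hnμ] at hle
    exact hle
  have H : CVHyp μ ν g κ k := ⟨hμ, hν0, hν, hg, hκ, hkpos, hkle⟩
  constructor
  · exact fun Λ _ n hn => CV.part_one H Λ n hn
  -- Part (ii).
  -- Limits of the directions.
  choose θlim hθlim using fun n => CV.theta_conv H n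
  have hθmem : ∀ n, θlim n ∈ Set.Icc (0:ℝ) 1 := by
    intro n
    exact isClosed_Icc.mem_of_tendsto (hθlim n)
      (Filter.eventually_atTop.2 ⟨n, fun Λ h => CV.θ_mem H h⟩)
  have hθrec : ∀ n, θlim n = CV.Φf μ ν g κ n (θlim (n+1)) := by
    intro n
    have hh := CV.hcomb_nonneg H n (hθmem (n+1))
    have hcont : ContinuousAt (fun θ : ℝ => CV.Φf μ ν g κ n θ) (θlim (n+1)) := by
      unfold CV.Φf
      apply ContinuousAt.div (by fun_prop) (by fun_prop)
      exact (by linarith : (0:ℝ) <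
        θlim (n+1) * CV.aa μ ν g κ n + (1 - θlim (n+1)) * CV.bb ν g κ n + 1).ne'
    have h2 : Tendsto (fun Λ => CV.Φf μ ν g κ n (CV.θfun μ ν g κ Λ (n+1))) atTop
        (nhds (CV.Φf μ ν g κ n (θlim (n+1)))) :=
      (hcont.tendsto).comp (hθlim (n+1))
    have h3 : Tendsto (fun Λ => CV.θfun μ ν g κ Λ n) atTop
        (nhds (CV.Φf μ ν g κ n (θlim (n+1)))) := by
      apply h2.congr'
      filter_upwards [Filter.eventually_atTop.2 ⟨n+1, fun Λ (h : n+1 ≤ Λ) => h⟩] with Λ hΛ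
      exact (CV.θ_rec H (by omega : n < Λ)).symm
    exact tendsto_nhds_unique (hθlim n) h3
  -- Limit of the products.
  set rinf : ℕ → ℝ := CV.Rfn μ ν g κ θlim with hrinf
  have hρlim_pos : ∀ i, 0 < CV.ρf μ ν g κ i (θlim (i+1)) :=
    fun i => CV.ρ_pos H i (hθmem (i+1))
  have hRconv : ∀ n, Tendsto (fun Λ => CV.Rfn μ ν g κ (CV.θfun μ ν g κ Λ) n) atTop
      (nhds (rinf n)) := by
    intro n
    apply tendsto_finset_prod
    intro i _
    have hcont : ContinuousAt (fun θ : ℝ => CV.ρf μ ν g κ i θ) (θlim (i+1)) := by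
      unfold CV.ρf; fun_prop
    exact ((hcont.tendsto).comp (hθlim (i+1))).inv₀ (hρlim_pos i).ne'
  have hrinf_pos : ∀ n, 0 < rinf n := fun n => CV.Rfn_pos H (fun j _ => hθmem j)
  -- Summability and domination.
  set bound : ℕ → ℝ := fun j => 1 / (Nat.factorial j * k^j) with hbound
  have hbound_eq : ∀ j, bound j = (1/k)^j / Nat.factorial j := by
    intro j
    have h1 : (Nat.factorial j : ℝ) ≠ 0 := by exact_mod_cast (Nat.factorial_pos j).ne'
    have h2 : k ≠ 0 := hkpos.ne'
    rw [hbound, div_pow, one_pow]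
    field_simp
  have hsumbound : Summable bound := by
    apply Summable.congr (Real.summable_pow_div_factorial (1/k))
    intro j
    rw [hbound_eq j]
  have hrle : ∀ n, rinf n ≤ bound n := fun n => CV.Rfn_le H (fun j _ => hθmem j)
  have hsumrinf : Summable rinf :=
    Summable.of_nonneg_of_le (fun n => (hrinf_pos n).le) hrle hsumbound
  set Tinf : ℝ := ∑' j, rinf j with hTinf
  have hTinf_ge : 1 ≤ Tinf := by
    have h0 : rinf 0 = 1 := by simp [hrinf, CV.Rfn]
    calc (1:ℝ) = rinf 0 := h0.symm
      _ ≤ Tinf := Summable.le_tsum hsumrinf 0 (fun j _ => (hrinf_pos j).le)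
  have hTpos : 0 < Tinf := lt_of_lt_of_le one_pos hTinf_ge
  -- Convergence of the normalizations.
  set TT : ℕ → ℝ := fun Λ => ∑ j ∈ Finset.range (Λ+1), CV.Rfn μ ν g κ (CV.θfun μ ν g κ Λ) j
    with hTT
  have hTconv : Tendsto TT atTop (nhds Tinf) := by
    have key : Tendsto (fun Λ => ∑' j, (if j ≤ Λ then CV.Rfn μ ν g κ (CV.θfun μ ν g κ Λ) j else 0))
        atTop (nhds (∑' j, rinf j)) := by
      apply tendsto_tsum_of_dominated_convergence hsumbound
      · intro j
        apply (hRconv j).congr'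
        filter_upwards [Filter.eventually_atTop.2 ⟨j, fun Λ (h : j ≤ Λ) => h⟩] with Λ hΛ
        rw [if_pos hΛ]
      · apply Filter.Eventually.of_forall
        intro Λ j
        by_cases hj : j ≤ Λ
        · rw [if_pos hj, Real.norm_eq_abs,
            abs_of_nonneg (CV.Rfn_pos H (fun i hi => CV.θ_mem H (by omega))).le]
          exact CV.Rfn_le H (fun i hi => CV.θ_mem H (by omega))
        · rw [if_neg hj]
          simp only [norm_zero]
          rw [hbound]
          positivity
    apply key.congr
    intro Λ
    rw [tsum_eq_sum (s := Finset.range (Λ+1))]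
    · apply Finset.sum_congr rfl
      intro j hj
      rw [Finset.mem_range] at hj
      rw [if_pos (by omega : j ≤ Λ)]
    · intro j hj
      rw [Finset.mem_range] at hj
      rw [if_neg (by omega : ¬ j ≤ Λ)]
  -- The limit distribution.
  refine ⟨fun n => ![rinf n * θlim n / Tinf, rinf n * (1 - θlim n) / Tinf], ?_, ?_, ?_, ?_⟩
  · -- pointwise convergence
    intro n y
    have hfrac : Tendsto (fun Λ => (if y = 0 then CV.θfun μ ν g κ Λ n
        else 1 - CV.θfun μ ν g κ Λ n)) atTop
        (nhds (if y = 0 then θlim n else 1 - θlim n)) := by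
      by_cases hy : y = 0
      · simpa [hy] using hθlim n
      · simpa [hy] using (tendsto_const_nhds (x := (1:ℝ))).sub (hθlim n)
    have hlim : Tendsto (fun Λ => CV.Rfn μ ν g κ (CV.θfun μ ν g κ Λ) n *
        (if y = 0 then CV.θfun μ ν g κ Λ n else 1 - CV.θfun μ ν g κ Λ n) / TT Λ) atTop
        (nhds (rinf n * (if y = 0 then θlim n else 1 - θlim n) / Tinf)) :=
      ((hRconv n).mul hfrac).div hTconv hTpos.ne'
    have heq : ![rinf n * θlim n / Tinf, rinf n * (1 - θlim n) / Tinf] y =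
        rinf n * (if y = 0 then θlim n else 1 - θlim n) / Tinf := by
      fin_cases y <;> simp
    show Tendsto (fun Λ : ℕ => piL μ ν g κ Λ n y) atTop
      (nhds (![rinf n * θlim n / Tinf, rinf n * (1 - θlim n) / Tinf] y))
    rw [heq]
    apply hlim.congr'
    filter_upwards [Filter.eventually_atTop.2 ⟨n, fun Λ (h : n ≤ Λ) => h⟩] with Λ hΛ
    exact (CV.piL_eq H hΛ y).symm
  · -- nonnegativity
    intro n y
    obtain ⟨h0, h1⟩ := hθmem n
    have := (hrinf_pos n).le
    fin_cases y
    · simp only [Matrix.cons_val_zero]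
      apply div_nonneg (mul_nonneg this h0) hTpos.le
    · simp only [Matrix.cons_val_one, Matrix.head_cons]
      apply div_nonneg (mul_nonneg this (by linarith)) hTpos.le
  · -- total mass one
    have hterm : ∀ n : ℕ,
        (![rinf n * θlim n / Tinf, rinf n * (1 - θlim n) / Tinf] : Fin 2 → ℝ) 0 +
        (![rinf n * θlim n / Tinf, rinf n * (1 - θlim n) / Tinf] : Fin 2 → ℝ) 1 =
          rinf n * Tinf⁻¹ := by
      intro n
      simp only [Matrix.cons_val_zero, Matrix.cons_val_one, Matrix.head_cons]
      rw [← add_div, div_eq_mul_inv]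
      ring_nf
    calc (∑' n : ℕ, ((![rinf n * θlim n / Tinf, rinf n * (1 - θlim n) / Tinf] : Fin 2 → ℝ) 0 +
          (![rinf n * θlim n / Tinf, rinf n * (1 - θlim n) / Tinf] : Fin 2 → ℝ) 1))
        = ∑' n : ℕ, rinf n * Tinf⁻¹ := by
          apply tsum_congr hterm
      _ = Tinf * Tinf⁻¹ := by rw [tsum_mul_right]
      _ = 1 := mul_inv_cancel₀ hTpos.ne'
  · -- stationarity equations
    set piInf : ℕ → Fin 2 → ℝ :=
      fun n => ![rinf n * θlim n / Tinf, rinf n * (1 - θlim n) / Tinf] with hpiInf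
    have hvec : ∀ n, piInf n = piInf (n+1) ᵥ* alphaMat μ ν g κ n := by
      intro n
      have hne : CV.ρf μ ν g κ n (θlim (n+1)) ≠ 0 := (hρlim_pos n).ne'
      have hr : rinf n = CV.ρf μ ν g κ n (θlim (n+1)) * rinf (n+1) := by
        have : rinf (n+1) = rinf n * (CV.ρf μ ν g κ n (θlim (n+1)))⁻¹ := by
          rw [hrinf]
          simp only [CV.Rfn, Finset.prod_range_succ]
        rw [this, mul_comm (CV.ρf μ ν g κ n (θlim (n + 1))), mul_assoc,
          inv_mul_cancel₀ hne, mul_one]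
      have hh := CV.hcomb_nonneg H n (hθmem (n+1))
      set A := CV.aa μ ν g κ n
      set B := CV.bb ν g κ n
      set θ' := θlim (n+1)
      have hΦ : θlim n = (θ' * A + (1-θ') * B) / (θ' * A + (1-θ') * B + 1) := hθrec n
      have hρ : CV.ρf μ ν g κ n θ' = CV.ff μ ν n * (θ' * A + (1-θ') * B + 1) := rfl
      have hd : (0:ℝ) < θ' * A + (1-θ') * B + 1 := by linarith
      apply funext
      rw [Fin.forall_fin_two]
      constructor
      · show rinf n * θlim n / Tinf = (piInf (n+1) ᵥ* alphaMat μ ν g κ n) 0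
        rw [CV.vecMul_alpha_zero]
        show _ = CV.ff μ ν n * ((rinf (n+1) * θlim (n+1) / Tinf) * A +
          (rinf (n+1) * (1 - θlim (n+1)) / Tinf) * B)
        rw [hΦ, hr, hρ]
        field_simp
        ring
      · show rinf n * (1 - θlim n) / Tinf = (piInf (n+1) ᵥ* alphaMat μ ν g κ n) 1
        rw [CV.vecMul_alpha_one]
        show _ = CV.ff μ ν n * ((rinf (n+1) * θlim (n+1) / Tinf) +
          (rinf (n+1) * (1 - θlim (n+1)) / Tinf))
        rw [hΦ, hr, hρ]
        field_simp
        ring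
    intro n
    match n with
    | 0 =>
      show piInf (0+1) ᵥ* Dmat ν (0+1) + piInf 0 ᵥ* Rmat μ ν g κ 0 +
        (if (0:ℕ) = 0 then (0 : Fin 2 → ℝ) else piInf (0-1)) ᵥ* Umat μ = 0
      rw [if_pos rfl, Matrix.zero_vecMul, add_zero, hvec 0, Matrix.vecMul_vecMul,
        ← Matrix.vecMul_add, CV.key_id0 H, Matrix.vecMul_zero]
    | Nat.succ m =>
      have hm : m + 1 ≠ 0 := Nat.succ_ne_zero m
      rw [if_neg hm]
      have e3 : piInf (m+1-1) ᵥ* Umat μ = piInf (m+2) ᵥ*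
          (alphaMat μ ν g κ (m+1) * (ν (m+1) • !![(0:ℝ),1;0,1])) := by
        show piInf m ᵥ* Umat μ = _
        rw [hvec m, Matrix.vecMul_vecMul, CV.alpha_mul_U H m, hvec (m+1),
          Matrix.vecMul_vecMul]
      rw [e3, hvec (m+1), Matrix.vecMul_vecMul, ← Matrix.vecMul_add, ← Matrix.vecMul_add,
        CV.key_idn H hm, Matrix.vecMul_zero]

end
end
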